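/- Suppose F is strictly convex and Θ ⊆ X is a nonempty, closed, convex set. Then for every x ∈ X, the projection set Π_F(x; Θ) contains at most one point. -/
import Mathlib


open Set Pointwise Filter Topology Bornology Function

variable {X : Type*} [NormedAddCommGroup X] [NormedSpace ℝ X]

/-- The Minkowski gauge of `F`: `ρ_F(x) = inf {t ≥ 0 : x ∈ t • F}`. -/
noncomputable def rhoF (F : Set X) (x : X) : ℝ :=
  sInf {t : ℝ | 0 ≤ t ∧ x ∈ t • F}

/-- The maximal time function `C_F(x; Q) = sup {ρ_F(q - x) : q ∈ Q}`. -/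
noncomputable def maxTime (F Q : Set X) (x : X) : ℝ :=
  sSup ((fun q => rhoF F (q - x)) '' Q)

/-- The minimal time function `T_F(x; Θ) = inf {ρ_F(q - x) : q ∈ Θ}`. -/
noncomputable def minTime (F Θ : Set X) (x : X) : ℝ :=
  sInf ((fun q => rhoF F (q - x)) '' Θ)

/-- The projection `Π_F(x; Θ) = {u ∈ Θ : ρ_F(u - x) = T_F(x; Θ)}`. -/
def nearProj (F Θ : Set X) (x : X) : Set X :=
  {u ∈ Θ | rhoF F (u - x) = minTime F Θ x}

lemma rhoF_eq_gauge (F : Set X) (hFne : F.Nonempty) (x : X) : rhoF F x = gauge F x := by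
  rcases eq_or_ne x 0 with rfl | hx
  · rw [gauge_zero, rhoF]
    refine le_antisymm (csInf_le ⟨0, fun t ht => ht.1⟩ ?_) (le_csInf ⟨0, ?_⟩ fun t ht => ht.1)
    · exact ⟨le_refl 0, by rw [zero_smul_set hFne]; exact rfl⟩
    · exact ⟨le_refl 0, by rw [zero_smul_set hFne]; exact rfl⟩
  · rw [rhoF, gauge]
    congr 1
    ext t
    simp only [Set.mem_setOf_eq]
    constructor
    · rintro ⟨ht, hm⟩
      rcases ht.eq_or_lt with rfl | ht'
      · exact absurd (by simpa [zero_smul_set hFne] using hm) hx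
      · exact ⟨ht', hm⟩
    · rintro ⟨ht, hm⟩
      exact ⟨ht.le, hm⟩

/-- Lemma 3.10. -/
theorem stmt15 (F Θ : Set X)
    (hFc : IsClosed F) (hFb : IsBounded F) (hFconv : Convex ℝ F)
    (hF0 : (0 : X) ∈ interior F) (hFs : StrictConvex ℝ F)
    (hΘne : Θ.Nonempty) (hΘc : IsClosed Θ) (hΘconv : Convex ℝ Θ) :
    ∀ x : X, (nearProj F Θ x).Subsingleton := by
  intro x u hu v hv
  by_contra huv
  have hFne : F.Nonempty := ⟨0, interior_subset hF0⟩
  have hFnhds : F ∈ 𝓝 (0 : X) := mem_interior_iff_mem_nhds.mp hF0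
  have habs : Absorbent ℝ F := absorbent_nhds_zero hFnhds
  have hvnb : Bornology.IsVonNBounded ℝ F := (NormedSpace.isVonNBounded_iff ℝ).mpr hFb
  obtain ⟨huΘ, huT⟩ := hu
  obtain ⟨hvΘ, hvT⟩ := hv
  set T := minTime F Θ x with hT
  rw [rhoF_eq_gauge F hFne] at huT hvT
  -- T ≥ 0
  have hbdd : BddBelow ((fun q => rhoF F (q - x)) '' Θ) := by
    refine ⟨0, ?_⟩
    rintro r ⟨q, hq, rfl⟩
    show 0 ≤ rhoF F (q - x)
    rw [rhoF_eq_gauge F hFne]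
    exact gauge_nonneg _
  have hT0 : 0 ≤ T := huT ▸ gauge_nonneg _
  rcases hT0.eq_or_lt with hTz | hTpos
  · -- T = 0 forces u = x = v
    have hu0 : u - x = 0 := (gauge_eq_zero habs hvnb).mp (huT.trans hTz.symm)
    have hv0 : v - x = 0 := (gauge_eq_zero habs hvnb).mp (hvT.trans hTz.symm)
    exact huv (by rw [sub_eq_zero] at hu0 hv0; rw [hu0, hv0])
  · -- T > 0: rescale to the boundary of F
    set a := T⁻¹ • (u - x) with ha
    set b := T⁻¹ • (v - x) with hb
    have hga : gauge F a = 1 := by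
      rw [ha, gauge_smul_of_nonneg (inv_nonneg.mpr hT0), huT, smul_eq_mul,
        inv_mul_cancel₀ hTpos.ne']
    have hgb : gauge F b = 1 := by
      rw [hb, gauge_smul_of_nonneg (inv_nonneg.mpr hT0), hvT, smul_eq_mul,
        inv_mul_cancel₀ hTpos.ne']
    have haF : a ∈ F := by
      rw [← hFc.closure_eq]
      exact (gauge_le_one_iff_mem_closure hFconv hFnhds).mp hga.le
    have hbF : b ∈ F := by
      rw [← hFc.closure_eq]
      exact (gauge_le_one_iff_mem_closure hFconv hFnhds).mp hgb.le
    have hab : a ≠ b := by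
      intro h
      apply huv
      have := smul_right_injective X (inv_ne_zero hTpos.ne') h
      rwa [sub_left_injective.eq_iff] at this
    have hmid : (1/2 : ℝ) • a + (1/2 : ℝ) • b ∈ interior F :=
      hFs haF hbF hab (by norm_num) (by norm_num) (by norm_num)
    have hgm : gauge F ((1/2 : ℝ) • a + (1/2 : ℝ) • b) < 1 :=
      (gauge_lt_one_iff_mem_interior hFconv hFnhds).mpr hmid
    -- the midpoint of u and v
    set m := (1/2 : ℝ) • u + (1/2 : ℝ) • v with hm
    have hmΘ : m ∈ Θ := hΘconv huΘ hvΘ (by norm_num) (by norm_num) (by norm_num)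
    have hTa : T • a = u - x := by rw [ha, smul_inv_smul₀ hTpos.ne']
    have hTb : T • b = v - x := by rw [hb, smul_inv_smul₀ hTpos.ne']
    have hmx : m - x = T • ((1/2 : ℝ) • a + (1/2 : ℝ) • b) := by
      rw [smul_add, smul_comm T (1/2 : ℝ) a, smul_comm T (1/2 : ℝ) b, hTa, hTb, hm]
      module
    have hgmx : gauge F (m - x) < T := by
      rw [hmx, gauge_smul_of_nonneg hT0, smul_eq_mul]
      calc T * gauge F ((1/2 : ℝ) • a + (1/2 : ℝ) • b) < T * 1 :=
            (mul_lt_mul_iff_right₀ hTpos).mpr hgm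
        _ = T := mul_one T
    have hle : T ≤ gauge F (m - x) := by
      have : rhoF F (m - x) ∈ (fun q => rhoF F (q - x)) '' Θ := ⟨m, hmΘ, rfl⟩
      have := csInf_le hbdd this
      rwa [rhoF_eq_gauge F hFne] at this
    exact absurd (hle.trans_lt hgmx) (lt_irrefl T)
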